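/- arXiv:2501.03828 — 4 statements merged into one kernel-verified Lean document; each statement's English description precedes it below -/
import Mathlib

section
/- Let f ∈ ℂ[x] be a polynomial of degree d ≥ 1. For each c ∈ ℂ let ℓ(c) denote the number of distinct roots of f − c in ℂ. Then d − ℓ(c) = 0 for all but finitely many c, and the sum over all c ∈ ℂ of (d − ℓ(c)) equals d − 1. -/
/-!
A root `a` of `f - c` of multiplicity `m` is a root of `f'` of multiplicity `m - 1`, so
`d - ℓ(c)` counts, with multiplicity, the roots of `f'` at which `f` takes the value `c`.
Summing over `c` counts every root of `f'` once, giving `deg f' = d - 1`.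
-/

open Polynomial

namespace Multiset

variable {α : Type*} [DecidableEq α]

theorem support_count (s : Multiset α) : Function.support (s.count ·) = s.toFinset := by
  ext a
  simp

theorem finsum_count (s : Multiset α) : ∑ᶠ a, s.count a = card s := by
  rw [finsum_eq_sum_of_support_subset _ (support_count s).subset, toFinset_sum_count_eq]

theorem finite_support_count (s : Multiset α) : (Function.support (s.count ·)).Finite := by
  rw [support_count]
  exact s.toFinset.finite_toSet

end Multiset

namespace Polynomial

section CharZero

variable {R : Type*} [CommRing R] [IsDomain R] [CharZero R] [DecidableEq R]

theorem filter_isRoot_roots_derivative (p : R[X]) [DecidablePred p.IsRoot] :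
    p.derivative.roots.filter p.IsRoot = p.roots - p.roots.dedup := by
  ext a
  rw [Multiset.count_filter, Multiset.count_sub, Multiset.count_dedup, count_roots, count_roots]
  by_cases ha : p.IsRoot a
  · rcases eq_or_ne p 0 with rfl | hp
    · simp
    rw [if_pos ha, if_pos ((mem_roots hp).2 ha), derivative_rootMultiplicity_of_root ha]
  · rw [if_neg ha, if_neg (mt isRoot_of_mem_roots ha), rootMultiplicity_eq_zero ha]

theorem card_roots_sub_card_roots_toFinset (p : R[X]) [DecidablePred p.IsRoot] :
    p.roots.card - p.roots.toFinset.card = (p.derivative.roots.filter p.IsRoot).card := by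
  rw [filter_isRoot_roots_derivative, Multiset.card_sub (Multiset.dedup_le _),
    Multiset.card_toFinset]

end CharZero

section IsAlgClosed

variable {K : Type*} [Field K] [IsAlgClosed K] [CharZero K] [DecidableEq K]

theorem natDegree_sub_card_roots_sub_C (f : K[X]) (c : K) :
    f.natDegree - (f - C c).roots.toFinset.card = (f.derivative.roots.map f.eval).count c := by
  classical
  rw [Multiset.count_map, ← natDegree_sub_C (a := c), ← IsAlgClosed.card_roots_eq_natDegree,
    card_roots_sub_card_roots_toFinset, derivative_sub, derivative_C, sub_zero]
  congr! 2 with a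
  rw [IsRoot.def, eval_sub, eval_C, sub_eq_zero, eq_comm]

end IsAlgClosed

end Polynomial

theorem stmt_5_general (f : Polynomial ℂ) :
    ({c : ℂ | f.natDegree - ((f - Polynomial.C c).roots.toFinset.card) ≠ 0}.Finite) ∧
    (∑ᶠ c : ℂ, (f.natDegree - ((f - Polynomial.C c).roots.toFinset.card)))
      = f.natDegree - 1 := by
  simp_rw [natDegree_sub_card_roots_sub_C]
  refine ⟨?_, ?_⟩
  · exact Multiset.finite_support_count _
  · rw [Multiset.finsum_count, Multiset.card_map, IsAlgClosed.card_roots_eq_natDegree,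
      natDegree_derivative]

/-- Riemann–Hurwitz for a degree-`d` polynomial `ℂ → ℂ`:
with `ℓ(c)` the number of distinct roots of `f − c`, one has `d − ℓ(c) = 0` for all but
finitely many `c`, and `∑_c (d − ℓ(c)) = d − 1`. -/
theorem stmt_5 (f : Polynomial ℂ) (hd : 1 ≤ f.natDegree) :
    ({c : ℂ | f.natDegree - ((f - Polynomial.C c).roots.toFinset.card) ≠ 0}.Finite) ∧
    (∑ᶠ c : ℂ, (f.natDegree - ((f - Polynomial.C c).roots.toFinset.card)))
      = f.natDegree - 1 :=
  stmt_5_general f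
end

section
/- Every injective polynomial map f : ℂⁿ → ℂⁿ is surjective, hence bijective. -/
/-- Ax–Grothendieck: an injective polynomial map `ℂⁿ → ℂⁿ` is surjective, hence bijective. -/
theorem stmt_6 (n : ℕ) (f : (Fin n → ℂ) → (Fin n → ℂ))
    (hpoly : ∃ F : Fin n → MvPolynomial (Fin n) ℂ,
      ∀ x i, f x i = MvPolynomial.eval x (F i))
    (hinj : Function.Injective f) :
    Function.Surjective f ∧ Function.Bijective f := by
  obtain ⟨F, hF⟩ := hpoly
  obtain rfl : f = fun x i => MvPolynomial.eval x (F i) := funext₂ hF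
  have hsurj : Function.Surjective _ := ax_grothendieck_univ F hinj
  exact ⟨hsurj, hinj, hsurj⟩
end

section
/- Let f = (f₁, …, fₙ) : ℝⁿ → ℝⁿ (or ℂⁿ → ℂⁿ) be a polynomial map in which every coordinate fᵢ is a polynomial of total degree at most 2. If the determinant of the Jacobian matrix of f is nonzero at every point, then f is injective. -/
/-! For a polynomial `p` of total degree at most two, the midpoint rule is exact:
`p a - p b = Dp ((a + b) / 2) (a - b)`. Both sides are linear in `p`, so it suffices to check
this on `1`, `X j` and `X j * X k`. Hence `F a = F b` puts `a - b` in the kernel of the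
Jacobian matrix of `F` at the midpoint, which is invertible. -/

open MvPolynomial
open scoped Matrix

theorem Finsupp.eq_zero_or_single_or_add_single_of_sum_le_two {σ : Type*} (d : σ →₀ ℕ)
    (hd : (d.sum fun _ e => e) ≤ 2) :
    d = 0 ∨ (∃ j, d = single j 1) ∨ ∃ j k, d = single j 1 + single k 1 := by
  classical
  obtain ⟨s, rfl⟩ := Multiset.toFinsupp.surjective d
  replace hd : Multiset.card s ≤ 2 := by
    rwa [← Multiset.toFinsupp_toMultiset s, card_toMultiset]
  interval_cases hcard : Multiset.card s
  · simp_all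
  · obtain ⟨j, rfl⟩ := Multiset.card_eq_one.mp hcard
    exact Or.inr (Or.inl ⟨j, Multiset.toFinsupp_singleton j⟩)
  · obtain ⟨j, k, rfl⟩ := Multiset.card_eq_two.mp hcard
    refine Or.inr (Or.inr ⟨j, k, ?_⟩)
    change Multiset.toFinsupp ({j} + {k}) = _
    rw [map_add, Multiset.toFinsupp_singleton, Multiset.toFinsupp_singleton]

namespace MvPolynomial

variable {K σ : Type*} [Field K] [Fintype σ]

def midpointRule (a b : σ → K) : Submodule K (MvPolynomial σ K) where
  carrier := {p | eval a p - eval b p =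
    ∑ j, eval (fun i => (a i + b i) / 2) (pderiv j p) * (a j - b j)}
  zero_mem' := by simp
  add_mem' {p q} hp hq := by
    simp only [Set.mem_ofPred_eq, map_add, add_mul, Finset.sum_add_distrib] at hp hq ⊢
    rw [← hp, ← hq]
    ring
  smul_mem' c p hp := by
    simp only [Set.mem_ofPred_eq, Derivation.map_smul, smul_eval, mul_assoc, ← Finset.mul_sum]
      at hp ⊢
    rw [← hp, mul_sub]

theorem one_mem_midpointRule (a b : σ → K) : 1 ∈ midpointRule a b := by
  simp [midpointRule]

theorem X_mem_midpointRule (a b : σ → K) (k : σ) : X k ∈ midpointRule a b := by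
  classical
  simp [midpointRule, Pi.single_apply]

theorem X_mul_X_mem_midpointRule [NeZero (2 : K)] (a b : σ → K) (j k : σ) :
    X j * X k ∈ midpointRule a b := by
  classical
  simp only [midpointRule, Submodule.mem_mk, AddSubmonoid.mem_mk, AddSubsemigroup.mem_mk,
    Set.mem_ofPred_eq, map_mul, eval_X, Derivation.leibniz, pderiv_X, Pi.single_apply, smul_eq_mul,
    mul_ite, mul_one, mul_zero, map_add, apply_ite (eval _), map_zero, add_mul, ite_mul, zero_mul,
    Finset.sum_add_distrib, Finset.sum_ite_eq, Finset.mem_univ, ↓reduceIte]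
  field_simp
  ring

theorem restrictTotalDegree_two_le_midpointRule [NeZero (2 : K)] (a b : σ → K) :
    restrictTotalDegree σ K 2 ≤ midpointRule a b := by
  rw [restrictTotalDegree, restrictSupport_eq_span, Submodule.span_le]
  rintro _ ⟨d, hd, rfl⟩
  rcases Finsupp.eq_zero_or_single_or_add_single_of_sum_le_two d hd with
    rfl | ⟨j, rfl⟩ | ⟨j, k, rfl⟩
  · exact one_mem_midpointRule a b
  · exact X_mem_midpointRule a b j
  · simpa [X, monomial_mul] using X_mul_X_mem_midpointRule a b j k

theorem eval_sub_eval_eq_sum_pderiv_midpoint [NeZero (2 : K)] {p : MvPolynomial σ K}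
    (hp : p.totalDegree ≤ 2) (a b : σ → K) :
    eval a p - eval b p = ∑ j, eval (fun i => (a i + b i) / 2) (pderiv j p) * (a j - b j) :=
  restrictTotalDegree_two_le_midpointRule a b ((mem_restrictTotalDegree σ 2 p).2 hp)

end MvPolynomial

/-- Wang's theorem: a polynomial map `𝕜ⁿ → 𝕜ⁿ` (with `𝕜 = ℝ` or `ℂ`) whose coordinates
have total degree at most 2 and whose Jacobian determinant vanishes nowhere is injective. -/
theorem stmt_7 (𝕜 : Type*) [RCLike 𝕜] (n : ℕ) (F : Fin n → MvPolynomial (Fin n) 𝕜)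
    (hdeg : ∀ i, (F i).totalDegree ≤ 2)
    (hjac : ∀ x : Fin n → 𝕜,
      (Matrix.det (fun i j => MvPolynomial.eval x (pderiv j (F i)))) ≠ 0) :
    Function.Injective (fun x : Fin n → 𝕜 => fun i => MvPolynomial.eval x (F i)) := by
  intro a b hab
  have hker :
      (Matrix.of fun i j => eval (fun k => (a k + b k) / 2) (pderiv j (F i))) *ᵥ (a - b) = 0 := by
    funext i
    simp only [Matrix.mulVec, dotProduct, Matrix.of_apply, Pi.sub_apply, Pi.zero_apply]
    rw [← eval_sub_eval_eq_sum_pderiv_midpoint (hdeg i)]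
    exact sub_eq_zero.2 (congrFun hab i)
  exact sub_eq_zero.mp (Matrix.eq_zero_of_mulVec_eq_zero (hjac _) hker)
end

section
/- Let f : ℝ³ → ℝ³ be defined by f(x, y, z) = (x, y, ((x² + y²)z² + z)²). For every w ≥ 0, there exists a sequence (xₖ, yₖ, zₖ) in ℝ³ with ‖(xₖ, yₖ, zₖ)‖ → ∞ and f(xₖ, yₖ, zₖ) → (0, 0, w); hence every point of the half-line {(0,0,w) : w ≥ 0} lies in the non-properness set of f. -/
open Filter

/-- The root of `c t² + t = s` that escapes to `-∞` as `c → 0⁺`. -/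
noncomputable def largeRoot (c s : ℝ) : ℝ := -(1 + √(1 + 4 * c * s)) / (2 * c)

lemma largeRoot_spec {c s : ℝ} (hc : c ≠ 0) (hs : 0 ≤ 1 + 4 * c * s) :
    c * largeRoot c s ^ 2 + largeRoot c s = s := by
  have hsqrt : √(1 + 4 * c * s) ^ 2 = 1 + 4 * c * s := Real.sq_sqrt hs
  unfold largeRoot
  generalize √(1 + 4 * c * s) = r at hsqrt ⊢
  field_simp
  linear_combination hsqrt

lemma inv_le_abs_largeRoot {c s : ℝ} (hc : 0 < c) (hs : 0 ≤ s) : c⁻¹ ≤ |largeRoot c s| := by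
  have hsqrt : 1 ≤ √(1 + 4 * c * s) := Real.one_le_sqrt.mpr (by nlinarith)
  have hneg : largeRoot c s ≤ 0 := div_nonpos_of_nonpos_of_nonneg (by linarith) (by linarith)
  rw [abs_of_nonpos hneg, largeRoot, neg_div, neg_neg, le_div_iff₀ (by positivity),
    inv_mul_eq_div, div_le_iff₀ hc]
  nlinarith

/-- Every point `(0, 0, w)` with `w ≥ 0` lies in the non-properness set of
`f(x,y,z) = (x, y, ((x² + y²)z² + z)²)`. -/
theorem stmt_19 (w : ℝ) (hw : 0 ≤ w) :
    ∃ z : ℕ → ℝ × ℝ × ℝ,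
      Tendsto (fun k => ‖z k‖) atTop atTop ∧
      Tendsto (fun k => ((z k).1, (z k).2.1,
          (((z k).1 ^ 2 + (z k).2.1 ^ 2) * (z k).2.2 ^ 2 + (z k).2.2) ^ 2)) atTop
        (nhds ((0 : ℝ), (0 : ℝ), w)) := by
  set x : ℕ → ℝ := fun k => ((k : ℝ) + 1)⁻¹
  have hx_sq_pos (k : ℕ) : 0 < x k ^ 2 := by positivity
  refine ⟨fun k => (x k, 0, largeRoot (x k ^ 2) √w), ?_, ?_⟩
  · have hinv : Tendsto (fun k => (x k ^ 2)⁻¹) atTop atTop := by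
      simpa [x, Function.comp_def] using (tendsto_pow_atTop two_ne_zero).comp
        (tendsto_natCast_atTop_atTop.atTop_add (tendsto_const_nhds (x := (1 : ℝ))))
    refine tendsto_atTop_mono (fun k => ?_) hinv
    calc (x k ^ 2)⁻¹ ≤ ‖largeRoot (x k ^ 2) √w‖ :=
          inv_le_abs_largeRoot (hx_sq_pos k) (Real.sqrt_nonneg w)
      _ ≤ ‖(x k, (0 : ℝ), largeRoot (x k ^ 2) √w)‖ :=
        (norm_snd_le ((0 : ℝ), _)).trans (norm_snd_le (x k, _))
  · have hfiber (k : ℕ) : ((x k ^ 2 + 0 ^ 2) * largeRoot (x k ^ 2) √w ^ 2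
        + largeRoot (x k ^ 2) √w) ^ 2 = w := by
      rw [zero_pow two_ne_zero, add_zero, largeRoot_spec (hx_sq_pos k).ne' (by positivity),
        Real.sq_sqrt hw]
    simp only [hfiber]
    exact (tendsto_one_div_add_atTop_nhds_zero_nat.congr fun k => one_div _).prodMk_nhds
      tendsto_const_nhds
end
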